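/- arXiv:1603.06163 — 2 statements merged into one kernel-verified Lean document; each statement's English description precedes it below -/
import Mathlib

section
/- Let c : X* → ℝ be a formal power series whose coefficients satisfy |(c,η)| ≤ K M^{|η|} for all words η (global convergence bound), and let u : [t0,t1] → ℝ^m be measurable with |u_i(t)| ≤ R a.e.; set R̄ := max(R,1). Then for every t ∈ [t0,t1] (with t1 − t0 arbitrary) the family (|(c,η)| · |E_η[u](t,t0)|)_{η ∈ X*} is summable, and |Σ_{η ∈ X*} (c,η) E_η[u](t,t0)| ≤ K · exp((m+1) M R̄ (t − t0)). In particular the Fliess operator F_c is well defined on [t0, t0+T] for all R, T > 0. -/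
/-!
Each letter contributes a factor `max R 1` and one integration, so by induction
`|E_η[u](t,t0)| ≤ R̄^|η| (t - t0)^|η| / |η|!`. Combined with the coefficient bound, the series
is dominated by `K Σ_η (M R̄ (t - t0))^|η| / |η|!`; there are `(m+1)^k` words of length `k`, so
this is `K Σ_k ((m+1) M R̄ (t - t0))^k / k! = K exp((m+1) M R̄ (t - t0))`.
-/

open MeasureTheory

/-- Extend `u : ℝ → ℝ^m` to the alphabet `X = {x_0, x_1, …, x_m}` by `u_0 ≡ 1`. -/
noncomputable def uext (m : ℕ) (u : ℝ → Fin m → ℝ) : ℝ → Fin (m + 1) → ℝ :=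
  fun t => Fin.cases 1 (fun j => u t j)

/-- Iterated integrals `E_η[u](t, t0)`: `E_∅[u] ≡ 1` and
`E_{x_i η̄}[u](t,t0) = ∫_{t0}^t u_i(τ) E_{η̄}[u](τ,t0) dτ`. -/
noncomputable def iterInt (m : ℕ) (u : ℝ → Fin m → ℝ) (t0 : ℝ) :
    List (Fin (m + 1)) → ℝ → ℝ
  | [] => fun _ => 1
  | i :: w => fun t => ∫ τ in t0..t, uext m u τ i * iterInt m u t0 w τ

open Set
open scoped Nat

section WordSums

variable {α : Type*} [Fintype α]

theorem summable_sigma_pow_div_factorial (a : ℝ) :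
    Summable fun p : Σ k : ℕ, Fin k → α => a ^ p.1 / p.1 ! := by
  have h_abs : Summable fun p : Σ k : ℕ, Fin k → α => |a| ^ p.1 / p.1 ! := by
    refine (summable_sigma_of_nonneg fun p => by positivity).mpr
      ⟨fun _ => Summable.of_finite, ?_⟩
    simp only [tsum_fintype, Finset.sum_const, Finset.card_univ, Fintype.card_fun,
      Fintype.card_fin, nsmul_eq_mul, Nat.cast_pow]
    simpa only [mul_pow, mul_div_assoc] using
      Real.summable_pow_div_factorial ((Fintype.card α : ℝ) * |a|)
  exact h_abs.of_norm_bounded fun p => by simp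

theorem hasSum_pow_length_div_factorial (a : ℝ) :
    HasSum (fun η : List α => a ^ η.length / η.length !) (Real.exp (Fintype.card α * a)) := by
  refine (List.equivSigmaTuple (α := α)).hasSum_iff
    (f := fun p : Σ k : ℕ, Fin k → α => a ^ p.1 / p.1 !).mpr ?_
  have h_exp := NormedSpace.expSeries_div_hasSum_exp ((Fintype.card α : ℝ) * a)
  rw [← Real.exp_eq_exp_ℝ] at h_exp
  refine h_exp.sigma_of_hasSum (fun k => ?_) (summable_sigma_pow_div_factorial a)
  have h_card : ((Fintype.card α : ℝ) * a) ^ k / k ! = ∑ _ : Fin k → α, a ^ k / k ! := by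
    simp only [Finset.sum_const, Finset.card_univ, Fintype.card_fun, Fintype.card_fin,
      nsmul_eq_mul, Nat.cast_pow, mul_pow, mul_div_assoc]
  rw [h_card]
  exact hasSum_fintype _

end WordSums

section IteratedIntegrals

variable {t0 t1 : ℝ}

theorem integral_sub_pow_div_factorial (t : ℝ) (k : ℕ) :
    ∫ τ in t0..t, (τ - t0) ^ k / k ! = (t - t0) ^ (k + 1) / (k + 1)! := by
  rw [intervalIntegral.integral_div, intervalIntegral.integral_comp_sub_right (· ^ k),
    integral_pow, sub_self, zero_pow k.succ_ne_zero, sub_zero, Nat.factorial_succ]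
  push_cast
  rw [div_div]

theorem abs_integral_le_pow_div_factorial {f : ℝ → ℝ} {C : ℝ} {k : ℕ}
    (hf : ∀ᵐ τ ∂(volume.restrict (Icc t0 t1)), |f τ| ≤ C * ((τ - t0) ^ k / k !))
    {t : ℝ} (ht : t ∈ Icc t0 t1) :
    |∫ τ in t0..t, f τ| ≤ C * ((t - t0) ^ (k + 1) / (k + 1)!) := by
  have h_sub : Ioc t0 t ⊆ Icc t0 t1 := Ioc_subset_Icc_self.trans (Icc_subset_Icc le_rfl ht.2)
  calc |∫ τ in t0..t, f τ|
      ≤ ∫ τ in t0..t, C * ((τ - t0) ^ k / k !) := by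
        refine intervalIntegral.norm_integral_le_of_norm_le (f := f) ht.1 ?_
          ((by fun_prop : Continuous fun τ => C * ((τ - t0) ^ k / k !)).intervalIntegrable _ _)
        exact (ae_restrict_iff' measurableSet_Icc).mp hf |>.mono fun τ h hτ => h (h_sub hτ)
    _ = C * ((t - t0) ^ (k + 1) / (k + 1)!) := by
        rw [intervalIntegral.integral_const_mul, integral_sub_pow_div_factorial]

variable {m : ℕ} {u : ℝ → Fin m → ℝ}

theorem measurable_uext (hmeas : ∀ i, Measurable fun t => u t i) (i : Fin (m + 1)) :
    Measurable fun τ => uext m u τ i := by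
  cases i using Fin.cases with
  | zero => exact measurable_const
  | succ j => exact hmeas j

theorem ae_abs_uext_le {μ : Measure ℝ} {R : ℝ} (hbd : ∀ i, ∀ᵐ t ∂μ, |u t i| ≤ R)
    (i : Fin (m + 1)) : ∀ᵐ τ ∂μ, |uext m u τ i| ≤ max R 1 := by
  cases i using Fin.cases with
  | zero => exact .of_forall fun _ => by simp [uext]
  | succ j => exact (hbd j).mono fun _ h => h.trans (le_max_left _ _)

theorem iterInt_aestronglyMeasurable_and_abs_le {R : ℝ} (hle : t0 ≤ t1)
    (hmeas : ∀ i, Measurable fun t => u t i)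
    (hbd : ∀ i, ∀ᵐ t ∂(volume.restrict (Icc t0 t1)), |u t i| ≤ R) (η : List (Fin (m + 1))) :
    AEStronglyMeasurable (iterInt m u t0 η) (volume.restrict (Icc t0 t1)) ∧
      ∀ t ∈ Icc t0 t1,
        |iterInt m u t0 η t| ≤ max R 1 ^ η.length * ((t - t0) ^ η.length / η.length !) := by
  induction η with
  | nil => exact ⟨aestronglyMeasurable_const, fun t _ => by simp [iterInt]⟩
  | cons i w ih =>
    obtain ⟨hw_meas, hw_bd⟩ := ih
    set f := fun τ => uext m u τ i * iterInt m u t0 w τ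
    have hf_meas : AEStronglyMeasurable f (volume.restrict (Icc t0 t1)) :=
      (measurable_uext hmeas i).aestronglyMeasurable.mul hw_meas
    have hf_bd : ∀ᵐ τ ∂(volume.restrict (Icc t0 t1)),
        |f τ| ≤ max R 1 ^ (w.length + 1) * ((τ - t0) ^ w.length / w.length !) := by
      filter_upwards [ae_abs_uext_le hbd i, ae_restrict_mem measurableSet_Icc] with τ hu hτ
      rw [abs_mul, pow_succ', mul_assoc]
      exact mul_le_mul hu (hw_bd τ hτ) (abs_nonneg _) (zero_le_one.trans (le_max_right _ _))
    have hf_int : IntegrableOn f (uIcc t0 t1) := by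
      rw [uIcc_of_le hle]
      exact (Continuous.integrableOn_Icc (by fun_prop)).mono' hf_meas hf_bd
    have h_cont := intervalIntegral.continuousOn_primitive_interval hf_int
    rw [uIcc_of_le hle] at h_cont
    exact ⟨h_cont.aestronglyMeasurable measurableSet_Icc,
      fun t ht => abs_integral_le_pow_div_factorial hf_bd ht⟩

end IteratedIntegrals

theorem fliess_global_convergence_general (m : ℕ) (t0 t1 K M R : ℝ)
    (c : List (Fin (m + 1)) → ℝ)
    (hc : ∀ η : List (Fin (m + 1)), |c η| ≤ K * M ^ η.length)
    (u : ℝ → Fin m → ℝ) (hmeas : ∀ i, Measurable fun t => u t i)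
    (hbd : ∀ i, ∀ᵐ t ∂(volume.restrict (Set.Icc t0 t1)), |u t i| ≤ R) :
    ∀ t ∈ Set.Icc t0 t1,
      Summable (fun η : List (Fin (m + 1)) => |c η| * |iterInt m u t0 η t|) ∧
      |∑' η : List (Fin (m + 1)), c η * iterInt m u t0 η t| ≤
        K * Real.exp ((m + 1 : ℝ) * M * max R 1 * (t - t0)) := by
  intro t ht
  set a := M * max R 1 * (t - t0)
  have h_dom : ∀ η : List (Fin (m + 1)),
      |c η| * |iterInt m u t0 η t| ≤ K * (a ^ η.length / η.length !) := fun η => by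
    have h_iter := (iterInt_aestronglyMeasurable_and_abs_le (ht.1.trans ht.2) hmeas hbd η).2 t ht
    calc |c η| * |iterInt m u t0 η t|
        ≤ K * M ^ η.length * (max R 1 ^ η.length * ((t - t0) ^ η.length / η.length !)) :=
          mul_le_mul (hc η) h_iter (abs_nonneg _) ((abs_nonneg _).trans (hc η))
      _ = K * (a ^ η.length / η.length !) := by simp only [a, mul_pow]; ring
  have h_exp := (hasSum_pow_length_div_factorial (α := Fin (m + 1)) a).mul_left K
  have h_sum := Summable.of_nonneg_of_le (fun _ => by positivity) h_dom h_exp.summable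
  refine ⟨h_sum, ?_⟩
  calc |∑' η, c η * iterInt m u t0 η t|
      ≤ ∑' η, |c η| * |iterInt m u t0 η t| := by
        have h_norm : Summable fun η => ‖c η * iterInt m u t0 η t‖ := by
          simpa only [Real.norm_eq_abs, abs_mul] using h_sum
        simpa only [Real.norm_eq_abs, abs_mul] using norm_tsum_le_tsum_norm h_norm
    _ ≤ K * Real.exp (Fintype.card (Fin (m + 1)) * a) :=
        (h_sum.tsum_le_tsum h_dom h_exp.summable).trans_eq h_exp.tsum_eq
    _ = K * Real.exp ((m + 1 : ℝ) * M * max R 1 * (t - t0)) := by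
        simp only [Fintype.card_fin, a]; push_cast; ring_nf

/-- Global convergence of Fliess operators.  If `|(c,η)| ≤ K M^{|η|}` for all words `η`,
`|u_i| ≤ R` a.e. on `[t0,t1]` and `R̄ = max R 1`, then for every `t ∈ [t0,t1]` (with
`t1 − t0` arbitrary) the family `(|(c,η)| |E_η[u](t,t0)|)_η` is summable and
`|Σ_η (c,η) E_η[u](t,t0)| ≤ K exp((m+1) M R̄ (t − t0))`; in particular the Fliess
operator `F_c` is well defined on `[t0, t0+T]` for all `R, T > 0`. -/
theorem fliess_global_convergence (m : ℕ) (t0 t1 K M R : ℝ)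
    (hK : 0 < K) (hM : 0 < M) (hlt : t0 < t1)
    (c : List (Fin (m + 1)) → ℝ)
    (hc : ∀ η : List (Fin (m + 1)), |c η| ≤ K * M ^ η.length)
    (u : ℝ → Fin m → ℝ) (hmeas : ∀ i, Measurable fun t => u t i)
    (hbd : ∀ i, ∀ᵐ t ∂(volume.restrict (Set.Icc t0 t1)), |u t i| ≤ R) :
    ∀ t ∈ Set.Icc t0 t1,
      Summable (fun η : List (Fin (m + 1)) => |c η| * |iterInt m u t0 η t|) ∧
      |∑' η : List (Fin (m + 1)), c η * iterInt m u t0 η t| ≤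
        K * Real.exp ((m + 1 : ℝ) * M * max R 1 * (t - t0)) :=
  fliess_global_convergence_general m t0 t1 K M R c hc u hmeas hbd
end

section
/- Let c, d : X* → ℝ be noncommutative polynomials (finitely supported formal power series) and u : [t0,t1] → ℝ^m integrable in each component. Then the parallel product of the corresponding Fliess operators satisfies F_c[u](t) · F_d[u](t) = F_{c ⧢ d}[u](t) for all t ∈ [t0,t1], where c ⧢ d is the shuffle product of the two polynomials. -/
open MeasureTheory

/-- `shuffleCoeff η ξ ν` is the coefficient `(η ⧢ ξ, ν)` of the word `ν` in the shuffle
product of the words `η` and `ξ`, defined inductively by `η ⧢ ∅ = ∅ ⧢ η = η` and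
`(x_i η) ⧢ (x_j ξ) = x_i (η ⧢ (x_j ξ)) + x_j ((x_i η) ⧢ ξ)`. -/
def shuffleCoeff {A : Type*} [DecidableEq A] : List A → List A → List A → ℝ
  | [], ξ, ν => if ν = ξ then 1 else 0
  | η, [], ν => if ν = η then 1 else 0
  | _ :: _, _ :: _, [] => 0
  | a :: η, b :: ξ, z :: ν =>
      (if z = a then shuffleCoeff η (b :: ξ) ν else 0) +
      (if z = b then shuffleCoeff (a :: η) ξ ν else 0)
termination_by _ _ ν => ν.length

/-!
For words, `E_{aη} E_{bξ}` is a product of two primitives. These are absolutely continuous, so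
integration by parts gives `∫ u_a E_η E_{bξ} + ∫ u_b E_{aη} E_ξ`; by induction along the
recursion of `⧢` the two integrands are Fliess sums of `η ⧢ bξ` and `aη ⧢ ξ`, and integrating
them prepends `a` resp. `b` to every word, which is exactly the recursion
`aη ⧢ bξ = a(η ⧢ bξ) + b(aη ⧢ ξ)`. Both sides of the theorem are bilinear in `(c, d)`, so the
identity for words is all that is needed.

A Fliess sum `F_p[u](t)` appears below as `linearCombination ℝ (fun ν => iterInt m u t0 ν t) p`.
-/

open Set Finsupp intervalIntegral

theorem linearCombination_eq_sum_support {α : Type*} (v : α → ℝ) (p : α →₀ ℝ) :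
    linearCombination ℝ v p = ∑ a ∈ p.support, p a * v a := by
  simp [linearCombination_apply, Finsupp.sum]

theorem linearCombination_eq_tsum {α : Type*} (v : α → ℝ) (p : α →₀ ℝ) :
    linearCombination ℝ v p = ∑' a, p a * v a := by
  rw [linearCombination_eq_sum_support,
    tsum_eq_sum fun a ha => by rw [notMem_support_iff.1 ha, zero_mul]]

section Shuffle

variable {A : Type*}

noncomputable def shuffle : List A → List A → (List A →₀ ℝ)
  | [], ξ => single ξ 1
  | a :: η, [] => single (a :: η) 1
  | a :: η, b :: ξ =>
      mapDomain (List.cons a) (shuffle η (b :: ξ)) + mapDomain (List.cons b) (shuffle (a :: η) ξ)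

theorem mapDomain_cons_apply_nil (a : A) (p : List A →₀ ℝ) : mapDomain (List.cons a) p [] = 0 :=
  mapDomain_of_notMem_range _ _ (by simp)

theorem mapDomain_cons_apply_cons [DecidableEq A] (a z : A) (ν : List A) (p : List A →₀ ℝ) :
    mapDomain (List.cons a) p (z :: ν) = if z = a then p ν else 0 := by
  split_ifs with h
  · exact h ▸ mapDomain_apply List.cons_injective p ν
  · exact mapDomain_of_notMem_range _ _ (by simp [Ne.symm h])

theorem shuffle_apply [DecidableEq A] (η ξ ν : List A) : shuffle η ξ ν = shuffleCoeff η ξ ν := by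
  induction ν generalizing η ξ with
  | nil =>
    rcases η with _ | ⟨a, η⟩ <;> rcases ξ with _ | ⟨b, ξ⟩ <;>
      simp [shuffle, shuffleCoeff, eq_comm, mapDomain_cons_apply_nil]
  | cons z ν ih =>
    rcases η with _ | ⟨a, η⟩ <;> rcases ξ with _ | ⟨b, ξ⟩ <;>
      simp [shuffle, shuffleCoeff, single_apply, eq_comm, mapDomain_cons_apply_cons, ih]

noncomputable def shuffleProduct (c d : List A →₀ ℝ) : List A →₀ ℝ :=
  c.sum fun η a => d.sum fun ξ b => (a * b) • shuffle η ξ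

theorem shuffleProduct_apply [DecidableEq A] (c d : List A →₀ ℝ) (ν : List A) :
    shuffleProduct c d ν = ∑ η ∈ c.support, ∑ ξ ∈ d.support, c η * d ξ * shuffleCoeff η ξ ν := by
  simp [shuffleProduct, Finsupp.sum, finsetSum_apply, shuffle_apply]

theorem linearCombination_shuffleProduct {v : List A → ℝ}
    (hv : ∀ η ξ, v η * v ξ = linearCombination ℝ v (shuffle η ξ)) (c d : List A →₀ ℝ) :
    linearCombination ℝ v (shuffleProduct c d) =
      linearCombination ℝ v c * linearCombination ℝ v d := by
  simp only [shuffleProduct, map_finsuppSum, map_smul, ← hv, linearCombination_apply,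
    smul_eq_mul, Finsupp.sum_mul]
  simp only [Finsupp.mul_sum]
  exact Finsupp.sum_congr fun _ _ => Finsupp.sum_congr fun _ _ => by ring

end Shuffle

theorem integral_mul_integral_eq_add {f g : ℝ → ℝ} {a b : ℝ}
    (hf : IntervalIntegrable f volume a b) (hg : IntervalIntegrable g volume a b) :
    (∫ x in a..b, f x) * (∫ x in a..b, g x) =
      (∫ x in a..b, f x * ∫ y in a..x, g y) + ∫ x in a..b, (∫ y in a..x, f y) * g x := by
  have deriv_primitive : ∀ {h : ℝ → ℝ}, IntervalIntegrable h volume a b →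
      ∀ᵐ x, x ∈ uIoc a b → deriv (fun x => ∫ y in a..x, h y) x = h x := fun hh => by
    filter_upwards [hh.ae_hasDerivAt_integral] with x hx hxab
    exact (hx (uIoc_subset_uIcc hxab) a left_mem_uIcc).deriv
  have parts := AbsolutelyContinuousOnInterval.integral_mul_deriv_eq_deriv_mul
    (hf.absolutelyContinuousOnInterval_intervalIntegral left_mem_uIcc)
    (hg.absolutelyContinuousOnInterval_intervalIntegral left_mem_uIcc)
  have hG : ∫ x in a..b, (∫ y in a..x, f y) * deriv (fun x => ∫ y in a..x, g y) x =
      ∫ x in a..b, (∫ y in a..x, f y) * g x :=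
    intervalIntegral.integral_congr_ae <| by
      filter_upwards [deriv_primitive hg] with x hx hxab; rw [hx hxab]
  have hF : ∫ x in a..b, deriv (fun x => ∫ y in a..x, f y) x * ∫ y in a..x, g y =
      ∫ x in a..b, f x * ∫ y in a..x, g y :=
    intervalIntegral.integral_congr_ae <| by
      filter_upwards [deriv_primitive hf] with x hx hxab; rw [hx hxab]
  rw [hG, hF, integral_same, zero_mul, sub_zero] at parts
  linarith

section IteratedIntegral

variable {m : ℕ} {u : ℝ → Fin m → ℝ} {t0 T : ℝ}

theorem intervalIntegrable_uext (hu : ∀ j, IntervalIntegrable (fun t => u t j) volume t0 T)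
    (i : Fin (m + 1)) : IntervalIntegrable (fun t => uext m u t i) volume t0 T := by
  cases i using Fin.cases with
  | zero => simp [uext]
  | succ j => simpa [uext] using hu j

theorem continuousOn_iterInt (hu : ∀ j, IntervalIntegrable (fun t => u t j) volume t0 T)
    (w : List (Fin (m + 1))) : ContinuousOn (iterInt m u t0 w) (uIcc t0 T) := by
  induction w with
  | nil => exact continuousOn_const
  | cons i w ih =>
    exact continuousOn_primitive_interval'
      ((intervalIntegrable_uext hu i).mul_continuousOn ih) left_mem_uIcc

theorem intervalIntegrable_uext_mul_iterInt
    (hu : ∀ j, IntervalIntegrable (fun t => u t j) volume t0 T) (i : Fin (m + 1))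
    (w : List (Fin (m + 1))) :
    IntervalIntegrable (fun t => uext m u t i * iterInt m u t0 w t) volume t0 T :=
  (intervalIntegrable_uext hu i).mul_continuousOn (continuousOn_iterInt hu w)

theorem integral_uext_mul_linearCombination_iterInt
    (hu : ∀ j, IntervalIntegrable (fun t => u t j) volume t0 T) (i : Fin (m + 1))
    (p : List (Fin (m + 1)) →₀ ℝ) :
    ∫ t in t0..T, uext m u t i * linearCombination ℝ (fun ν => iterInt m u t0 ν t) p =
      linearCombination ℝ (fun ν => iterInt m u t0 ν T) (mapDomain (List.cons i) p) := by
  rw [linearCombination_mapDomain]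
  simp only [linearCombination_apply, Finsupp.sum, Finset.mul_sum, smul_eq_mul,
    Function.comp_def, mul_left_comm (uext m u _ i)]
  rw [integral_finsetSum fun ν _ => (intervalIntegrable_uext_mul_iterInt hu i ν).const_mul (p ν)]
  simp only [intervalIntegral.integral_const_mul]
  rfl

theorem iterInt_mul_iterInt (η ξ : List (Fin (m + 1)))
    (hu : ∀ j, IntervalIntegrable (fun t => u t j) volume t0 T) :
    iterInt m u t0 η T * iterInt m u t0 ξ T =
      linearCombination ℝ (fun ν => iterInt m u t0 ν T) (shuffle η ξ) := by
  induction η, ξ using shuffle.induct generalizing T with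
  | case1 ξ => simp [shuffle, iterInt]
  | case2 a η => simp [shuffle, iterInt]
  | case3 a η b ξ ih_left ih_right =>
    have hu_sub : ∀ x ∈ uIcc t0 T, ∀ j, IntervalIntegrable (fun t => u t j) volume t0 x :=
      fun x hx j => (hu j).mono_set (uIcc_subset_uIcc left_mem_uIcc hx)
    calc iterInt m u t0 (a :: η) T * iterInt m u t0 (b :: ξ) T
        = (∫ x in t0..T, uext m u x a * iterInt m u t0 η x) *
            ∫ x in t0..T, uext m u x b * iterInt m u t0 ξ x := rfl
      _ = (∫ x in t0..T, uext m u x a * iterInt m u t0 η x * iterInt m u t0 (b :: ξ) x) +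
            ∫ x in t0..T, iterInt m u t0 (a :: η) x * (uext m u x b * iterInt m u t0 ξ x) :=
        integral_mul_integral_eq_add (intervalIntegrable_uext_mul_iterInt hu a η)
          (intervalIntegrable_uext_mul_iterInt hu b ξ)
      _ = (∫ x in t0..T, uext m u x a *
              linearCombination ℝ (fun ν => iterInt m u t0 ν x) (shuffle η (b :: ξ))) +
            ∫ x in t0..T, uext m u x b *
              linearCombination ℝ (fun ν => iterInt m u t0 ν x) (shuffle (a :: η) ξ) := by
        congr 1 <;> refine integral_congr fun x hx => ?_
        · rw [← ih_left (hu_sub x hx)]; ring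
        · rw [← ih_right (hu_sub x hx)]; ring
      _ = linearCombination ℝ (fun ν => iterInt m u t0 ν T) (shuffle (a :: η) (b :: ξ)) := by
        rw [integral_uext_mul_linearCombination_iterInt hu,
          integral_uext_mul_linearCombination_iterInt hu, shuffle, map_add]

end IteratedIntegral

theorem fliess_parallel_product_general (m : ℕ) (t0 t1 : ℝ)
    (c d : List (Fin (m + 1)) →₀ ℝ)
    (u : ℝ → Fin m → ℝ)
    (hint : ∀ i, IntegrableOn (fun t => u t i) (Set.Icc t0 t1)) :
    ∀ t ∈ Set.Icc t0 t1,
      (∑ η ∈ c.support, c η * iterInt m u t0 η t) *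
        (∑ ξ ∈ d.support, d ξ * iterInt m u t0 ξ t) =
      ∑' ν : List (Fin (m + 1)),
        (∑ η ∈ c.support, ∑ ξ ∈ d.support, c η * d ξ * shuffleCoeff η ξ ν) *
          iterInt m u t0 ν t := by
  intro t ht
  have hu : ∀ j, IntervalIntegrable (fun τ => u τ j) volume t0 t := fun j =>
    (intervalIntegrable_iff_integrableOn_Icc_of_le ht.1).2
      ((hint j).mono_set (Icc_subset_Icc_right ht.2))
  simp only [← linearCombination_eq_sum_support, ← shuffleProduct_apply,
    ← linearCombination_eq_tsum]
  exact (linearCombination_shuffleProduct (fun η ξ => iterInt_mul_iterInt η ξ hu) c d).symm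

/-- For finitely supported (polynomial) generating series `c, d` and integrable `u`, the
parallel product of Fliess operators satisfies `F_c[u](t) · F_d[u](t) = F_{c ⧢ d}[u](t)`,
where `c ⧢ d` is the (bilinearly extended) shuffle product. -/
theorem fliess_parallel_product (m : ℕ) (t0 t1 : ℝ) (hlt : t0 < t1)
    (c d : List (Fin (m + 1)) →₀ ℝ)
    (u : ℝ → Fin m → ℝ)
    (hint : ∀ i, IntegrableOn (fun t => u t i) (Set.Icc t0 t1)) :
    ∀ t ∈ Set.Icc t0 t1,
      (∑ η ∈ c.support, c η * iterInt m u t0 η t) *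
        (∑ ξ ∈ d.support, d ξ * iterInt m u t0 ξ t) =
      ∑' ν : List (Fin (m + 1)),
        (∑ η ∈ c.support, ∑ ξ ∈ d.support, c η * d ξ * shuffleCoeff η ξ ν) *
          iterInt m u t0 ν t :=
  fliess_parallel_product_general m t0 t1 c d u hint
end
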